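/- arXiv:1203.2996 — 6 statements merged into one kernel-verified Lean document; each statement's English description precedes it below -/
import Mathlib

section
/- Let N ∈ ℕ with N ≥ 1, let S be a subtree of the N-ary rooted tree, and let m be an integer with 1 ≤ m ≤ N. Suppose that for every m-regular subtree R of the N-ary tree, the set S ∩ R is infinite. Then there exists an (N−m+1)-regular subtree of the N-ary tree that is contained in S. -/
/-- A subtree of the `N`-ary rooted tree (vertices are lists over `Fin N`,
the root is the empty list): a set of vertices containing the root and
closed under taking prefixes. -/
def IsSubtree {N : ℕ} (S : Set (List (Fin N))) : Prop :=
  [] ∈ S ∧ ∀ σ ∈ S, ∀ τ : List (Fin N), τ <+: σ → τ ∈ S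

/-- An `m`-regular subtree: every vertex has exactly `m` one-step extensions
in the tree. -/
def IsRegularSubtree {N : ℕ} (m : ℕ) (R : Set (List (Fin N))) : Prop :=
  IsSubtree R ∧ ∀ σ ∈ R, {i : Fin N | σ ++ [i] ∈ R}.ncard = m

/-!
Call a vertex `σ` large if `treeShift S σ`, the part of `S` above `σ`, meets every `m`-regular
subtree in an infinite set. If `m` children of a large vertex were not large, the `m`-regular
subtrees witnessing this could be grafted onto a common root, giving an `m`-regular subtree that
meets the part of `S` above `σ` in a finite set. Hence a large vertex has fewer than `m` children
that are not large, i.e. at least `N - m + 1` large ones, and choosing `N - m + 1` large children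
at every large vertex, starting from the root, yields an `(N - m + 1)`-regular subtree. Its
vertices lie in `S` because `m`-regular subtrees exist.
-/

section RegularSubtree

variable {N : ℕ}

def treeShift (S : Set (List (Fin N))) (σ : List (Fin N)) : Set (List (Fin N)) :=
  {τ | σ ++ τ ∈ S}

def MeetsAllRegular (m : ℕ) (T : Set (List (Fin N))) : Prop :=
  ∀ R : Set (List (Fin N)), IsRegularSubtree m R → (T ∩ R).Infinite

def graft (I : Set (Fin N)) (R : Fin N → Set (List (Fin N))) : Set (List (Fin N)) :=
  insert [] (⋃ i ∈ I, (i :: ·) '' R i)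

def choiceTree (C : List (Fin N) → Set (Fin N)) : Set (List (Fin N)) :=
  {σ | ∀ τ i, τ ++ [i] <+: σ → i ∈ C τ}

theorem isRegularSubtree_words (A : Set (Fin N)) :
    IsRegularSubtree A.ncard {σ : List (Fin N) | ∀ x ∈ σ, x ∈ A} := by
  refine ⟨⟨by simp, fun σ hσ τ hτ x hx => hσ x (hτ.subset hx)⟩, fun σ hσ => ?_⟩
  congr 1
  ext i
  simp only [Set.mem_ofPred_eq, List.mem_append, List.mem_singleton]
  exact ⟨fun h => h i (Or.inr rfl), fun hi x hx => hx.elim (hσ x) (· ▸ hi)⟩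

theorem exists_isRegularSubtree {m : ℕ} (hmN : m ≤ N) :
    ∃ R : Set (List (Fin N)), IsRegularSubtree m R := by
  obtain ⟨A, -, hA⟩ :=
    Set.exists_subset_card_eq (s := (Set.univ : Set (Fin N))) (by simpa using hmN)
  exact ⟨_, hA ▸ isRegularSubtree_words A⟩

theorem MeetsAllRegular.nonempty {m : ℕ} {T : Set (List (Fin N))} (h : MeetsAllRegular m T)
    (hmN : m ≤ N) : T.Nonempty := by
  obtain ⟨R, hR⟩ := exists_isRegularSubtree hmN
  exact (h R hR).nonempty.mono Set.inter_subset_left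

theorem IsSubtree.mem_of_treeShift_nonempty {S : Set (List (Fin N))} (hS : IsSubtree S)
    {σ : List (Fin N)} (h : (treeShift S σ).Nonempty) : σ ∈ S := by
  obtain ⟨τ, hτ⟩ := h
  exact hS.2 _ hτ σ (List.prefix_append σ τ)

section Graft

variable {I : Set (Fin N)} {R : Fin N → Set (List (Fin N))}

theorem nil_mem_graft : [] ∈ graft I R :=
  Set.mem_insert _ _

@[simp]
theorem cons_mem_graft {i : Fin N} {τ : List (Fin N)} : i :: τ ∈ graft I R ↔ i ∈ I ∧ τ ∈ R i := by
  simp [graft, and_comm]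

theorem mem_graft {l : List (Fin N)} :
    l ∈ graft I R ↔ l = [] ∨ ∃ i ∈ I, ∃ τ ∈ R i, l = i :: τ := by
  cases l <;> simp [nil_mem_graft]

theorem isSubtree_graft (hR : ∀ i ∈ I, IsSubtree (R i)) : IsSubtree (graft I R) := by
  refine ⟨nil_mem_graft, fun l hl τ hτ => ?_⟩
  rcases mem_graft.1 hl with rfl | ⟨i, hi, τ', hτ', rfl⟩
  · rw [List.prefix_nil.1 hτ]
    exact nil_mem_graft
  · rcases List.prefix_cons_iff.1 hτ with rfl | ⟨t, rfl, ht⟩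
    · exact nil_mem_graft
    · exact cons_mem_graft.2 ⟨hi, (hR i hi).2 τ' hτ' t ht⟩

theorem isRegularSubtree_graft {m : ℕ} (hI : I.ncard = m)
    (hR : ∀ i ∈ I, IsRegularSubtree m (R i)) : IsRegularSubtree m (graft I R) := by
  refine ⟨isSubtree_graft fun i hi => (hR i hi).1, fun l hl => ?_⟩
  rcases mem_graft.1 hl with rfl | ⟨i, hi, τ, hτ, rfl⟩
  · have hroot : {j : Fin N | [] ++ [j] ∈ graft I R} = I := by
      ext j
      simpa using fun hj => (hR j hj).1.1
    rw [hroot, hI]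
  · have hchild : {j : Fin N | i :: τ ++ [j] ∈ graft I R} = {j | τ ++ [j] ∈ R i} := by
      ext j
      simp [hi]
    rw [hchild]
    exact (hR i hi).2 τ hτ

theorem Set.Finite.graft (hI : I.Finite) (hR : ∀ i ∈ I, (R i).Finite) : (graft I R).Finite :=
  (hI.biUnion fun i hi => (hR i hi).image _).insert []

theorem treeShift_inter_graft_subset (S : Set (List (Fin N))) (σ : List (Fin N)) :
    treeShift S σ ∩ graft I R ⊆ graft I fun i => treeShift S (σ ++ [i]) ∩ R i := by
  rintro l ⟨hlS, hlR⟩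
  rcases mem_graft.1 hlR with rfl | ⟨i, hi, τ, hτ, rfl⟩
  · exact nil_mem_graft
  · exact cons_mem_graft.2 ⟨hi, by simpa [treeShift] using hlS, hτ⟩

end Graft

theorem ncard_setOf_not_meetsAllRegular_lt {m : ℕ} {S : Set (List (Fin N))} {σ : List (Fin N)}
    (h : MeetsAllRegular m (treeShift S σ)) :
    {i : Fin N | ¬ MeetsAllRegular m (treeShift S (σ ++ [i]))}.ncard < m := by
  by_contra! hm
  obtain ⟨I, hIbad, hI⟩ := Set.exists_subset_card_eq hm
  have hwitness : ∀ i ∈ I, ∃ R, IsRegularSubtree m R ∧ (treeShift S (σ ++ [i]) ∩ R).Finite := by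
    intro i hi
    simpa [MeetsAllRegular] using hIbad hi
  choose! R hR hfin using hwitness
  exact h (graft I R) (isRegularSubtree_graft hI hR)
    (((Set.toFinite I).graft hfin).subset (treeShift_inter_graft_subset S σ))

theorem le_ncard_setOf_meetsAllRegular {m : ℕ} (hmN : m ≤ N) {S : Set (List (Fin N))}
    {σ : List (Fin N)} (h : MeetsAllRegular m (treeShift S σ)) :
    N - m + 1 ≤ {i : Fin N | MeetsAllRegular m (treeShift S (σ ++ [i]))}.ncard := by
  have hsum := Set.ncard_add_ncard_compl {i : Fin N | MeetsAllRegular m (treeShift S (σ ++ [i]))}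
  have hbad := ncard_setOf_not_meetsAllRegular_lt h
  rw [Set.compl_ofPred, Nat.card_eq_fintype_card, Fintype.card_fin] at hsum
  omega

section ChoiceTree

variable {C : List (Fin N) → Set (Fin N)}

theorem nil_mem_choiceTree : [] ∈ choiceTree C :=
  fun τ i h => absurd h.length_le (by simp)

theorem append_singleton_mem_choiceTree {σ : List (Fin N)} {i : Fin N} :
    σ ++ [i] ∈ choiceTree C ↔ σ ∈ choiceTree C ∧ i ∈ C σ := by
  refine ⟨fun h => ⟨fun τ j hτ => h τ j (hτ.trans (List.prefix_append _ _)),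
    h σ i (List.prefix_refl _)⟩, fun ⟨hσ, hi⟩ τ j hτ => ?_⟩
  rcases List.prefix_concat_iff.1 hτ with heq | hτ
  · obtain ⟨rfl, hji⟩ := List.append_inj' heq rfl
    obtain rfl : j = i := by simpa using hji
    exact hi
  · exact hσ τ j hτ

theorem isRegularSubtree_choiceTree {k : ℕ} (hC : ∀ σ ∈ choiceTree C, (C σ).ncard = k) :
    IsRegularSubtree k (choiceTree C) := by
  refine ⟨⟨nil_mem_choiceTree, fun σ hσ τ hτ ρ i hρ => hσ ρ i (hρ.trans hτ)⟩, fun σ hσ => ?_⟩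
  have hchildren : {i : Fin N | σ ++ [i] ∈ choiceTree C} = C σ := by
    ext i
    simp [append_singleton_mem_choiceTree, hσ]
  rw [hchildren, hC σ hσ]

theorem forall_mem_choiceTree_of {P : List (Fin N) → Prop} (h0 : P [])
    (hstep : ∀ σ, P σ → ∀ i ∈ C σ, P (σ ++ [i])) : ∀ σ ∈ choiceTree C, P σ := by
  intro σ
  induction σ using List.reverseRecOn with
  | nil => exact fun _ => h0
  | append_singleton σ i ih =>
    intro h
    obtain ⟨hσ, hi⟩ := append_singleton_mem_choiceTree.1 h
    exact hstep σ (ih hσ) i hi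

end ChoiceTree

theorem exists_isRegularSubtree_forall_of_le_ncard {k : ℕ} {P : List (Fin N) → Prop}
    (h0 : P []) (hP : ∀ σ, P σ → k ≤ {i : Fin N | P (σ ++ [i])}.ncard) :
    ∃ F : Set (List (Fin N)), IsRegularSubtree k F ∧ ∀ σ ∈ F, P σ := by
  have hchoice : ∀ σ, ∃ A : Set (Fin N), P σ → A ⊆ {i | P (σ ++ [i])} ∧ A.ncard = k := by
    intro σ
    by_cases hσ : P σ
    · obtain ⟨A, hA, hcard⟩ := Set.exists_subset_card_eq (hP σ hσ)
      exact ⟨A, fun _ => ⟨hA, hcard⟩⟩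
    · exact ⟨∅, fun h => absurd h hσ⟩
  choose C hC using hchoice
  have hF : ∀ σ ∈ choiceTree C, P σ :=
    forall_mem_choiceTree_of h0 fun σ hσ i hi => (hC σ hσ).1 hi
  exact ⟨choiceTree C, isRegularSubtree_choiceTree fun σ hσ => (hC σ (hF σ hσ)).2, hF⟩

end RegularSubtree

theorem subtree_regular_of_infinite_inter_general (N : ℕ)
    (S : Set (List (Fin N))) (hS : IsSubtree S)
    (m : ℕ) (hmN : m ≤ N)
    (hyp : ∀ R : Set (List (Fin N)), IsRegularSubtree m R → (S ∩ R).Infinite) :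
    ∃ F : Set (List (Fin N)), F ⊆ S ∧ IsRegularSubtree (N - m + 1) F := by
  obtain ⟨F, hF, hlarge⟩ := exists_isRegularSubtree_forall_of_le_ncard
    (P := fun σ => MeetsAllRegular m (treeShift S σ)) hyp
    (fun σ hσ => le_ncard_setOf_meetsAllRegular hmN hσ)
  exact ⟨F, fun σ hσ => hS.mem_of_treeShift_nonempty ((hlarge σ hσ).nonempty hmN), hF⟩

/-- Proposition 1: if `S` is a subtree of the `N`-ary tree such that `S ∩ R` is
infinite for every `m`-regular subtree `R`, then `S` contains an
`(N - m + 1)`-regular subtree. -/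
theorem subtree_regular_of_infinite_inter (N : ℕ) (hN : 1 ≤ N)
    (S : Set (List (Fin N))) (hS : IsSubtree S)
    (m : ℕ) (hm : 1 ≤ m) (hmN : m ≤ N)
    (hyp : ∀ R : Set (List (Fin N)), IsRegularSubtree m R → (S ∩ R).Infinite) :
    ∃ F : Set (List (Fin N)), F ⊆ S ∧ IsRegularSubtree (N - m + 1) F :=
  subtree_regular_of_infinite_inter_general N S hS m hmN hyp
end

section
/- Let N, h ∈ ℕ with N ≥ 1 and h ≥ 1, let T be the full N-ary tree of height h (all lists over Fin N of length ≤ h), let S ⊆ T be a subtree, and let m be an integer with 1 ≤ m ≤ N. Suppose that for every (m,h)-regular subtree R of T, there exists a list of length h belonging to both S and R. Then S contains an (N−m+1,h)-regular subtree. -/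
/-- An `(m,h)`-regular subtree: a subtree all of whose vertices have length `≤ h`
such that every vertex of length `< h` has exactly `m` one-step extensions
in the tree. -/
def IsRegularSubtreeOfHeight {N : ℕ} (m h : ℕ) (R : Set (List (Fin N))) : Prop :=
  IsSubtree R ∧ (∀ σ ∈ R, σ.length ≤ h) ∧
    ∀ σ ∈ R, σ.length < h → {i : Fin N | σ ++ [i] ∈ R}.ncard = m

/-!
Call `σ` branching to depth `k` if `σ ∈ S` and, when `k > 0`, at least `n = N - m + 1` of its
children are branching to depth `k - 1`. If the root is branching to depth `h`, choosing `n`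
branching children at every vertex grows an `(n, h)`-regular subtree inside `S`. Otherwise every
non-branching vertex has at least `N + 1 - n = m` non-branching children (a vertex of `S` has fewer
than `n` branching ones, and a vertex outside `S` has all its children outside `S`), so choosing
`m` of them at every vertex grows an `(m, h)`-regular subtree whose level `h` misses `S`.
-/

open Set

section ChildTree

variable {N : ℕ}

def childTree (c : List (Fin N) → Set (Fin N)) (h : ℕ) : Set (List (Fin N)) :=
  {σ | σ.length ≤ h ∧ ∀ τ i, τ ++ [i] <+: σ → i ∈ c τ}

variable {c : List (Fin N) → Set (Fin N)} {h : ℕ}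

lemma isSubtree_childTree : IsSubtree (childTree c h) :=
  ⟨⟨Nat.zero_le _, fun _ _ hτ => by simpa using hτ.length_le⟩,
    fun _ hσ _ hτσ =>
      ⟨hτσ.length_le.trans hσ.1, fun τ i hτ => hσ.2 τ i (hτ.trans hτσ)⟩⟩

lemma append_singleton_mem_childTree_iff {σ : List (Fin N)} (hσ : σ ∈ childTree c h)
    (i : Fin N) :
    σ ++ [i] ∈ childTree c h ↔ σ.length < h ∧ i ∈ c σ := by
  simp only [childTree, mem_ofPred_eq, List.length_append, List.length_singleton,
    Nat.add_one_le_iff, List.prefix_concat_iff, List.append_singleton_inj]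
  constructor
  · rintro ⟨hlen, hc⟩
    exact ⟨hlen, hc σ i (Or.inl ⟨rfl, rfl⟩)⟩
  · rintro ⟨hlen, hi⟩
    refine ⟨hlen, fun τ j hτ => ?_⟩
    rcases hτ with ⟨rfl, rfl⟩ | hτ
    · exact hi
    · exact hσ.2 τ j hτ

lemma childTree_induction {P : List (Fin N) → Prop} (hroot : P [])
    (hstep : ∀ σ, P σ → σ.length < h → ∀ i ∈ c σ, P (σ ++ [i])) :
    ∀ σ ∈ childTree c h, P σ := by
  intro σ
  induction σ using List.reverseRecOn with
  | nil => exact fun _ => hroot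
  | append_singleton σ i ih =>
    intro hσi
    have hσ : σ ∈ childTree c h := isSubtree_childTree.2 _ hσi σ (List.prefix_append σ [i])
    obtain ⟨hlen, hi⟩ := (append_singleton_mem_childTree_iff hσ i).1 hσi
    exact hstep σ (ih hσ) hlen i hi

lemma isRegularSubtreeOfHeight_childTree {k : ℕ}
    (hc : ∀ σ ∈ childTree c h, σ.length < h → (c σ).ncard = k) :
    IsRegularSubtreeOfHeight k h (childTree c h) :=
  ⟨isSubtree_childTree, fun _ hσ => hσ.1, fun σ hσ hlen => by
    simpa [append_singleton_mem_childTree_iff hσ, hlen] using hc σ hσ hlen⟩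

theorem exists_regularSubtree_forall_of_le_ncard {P : List (Fin N) → Prop} {k : ℕ}
    (hroot : P [])
    (hchildren : ∀ σ, P σ → σ.length < h → k ≤ {i | P (σ ++ [i])}.ncard) :
    ∃ R, IsRegularSubtreeOfHeight k h R ∧ ∀ σ ∈ R, P σ := by
  have hchoice : ∀ σ, ∃ s : Set (Fin N),
      P σ → σ.length < h → s ⊆ {i | P (σ ++ [i])} ∧ s.ncard = k := by
    intro σ
    by_cases hσ : P σ ∧ σ.length < h
    · obtain ⟨s, hs, hcard⟩ := exists_subset_card_eq (hchildren σ hσ.1 hσ.2)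
      exact ⟨s, fun _ _ => ⟨hs, hcard⟩⟩
    · exact ⟨∅, fun hP hlen => absurd ⟨hP, hlen⟩ hσ⟩
  choose c hc using hchoice
  have hP : ∀ σ ∈ childTree c h, P σ :=
    childTree_induction hroot fun σ hσ hlen => (hc σ hσ hlen).1
  exact ⟨childTree c h,
    isRegularSubtreeOfHeight_childTree fun σ hσ hlen => (hc σ (hP σ hσ) hlen).2, hP⟩

end ChildTree

section Branching

variable {N : ℕ} {S : Set (List (Fin N))} {m n h : ℕ} {σ : List (Fin N)}

def IsBranching (S : Set (List (Fin N))) (n : ℕ) : ℕ → List (Fin N) → Prop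
  | 0, σ => σ ∈ S
  | k + 1, σ => σ ∈ S ∧ n ≤ {i | IsBranching S n k (σ ++ [i])}.ncard

lemma IsBranching.mem {k : ℕ} (hσ : IsBranching S n k σ) : σ ∈ S := by
  cases k with
  | zero => exact hσ
  | succ k => exact hσ.1

lemma isBranching_sub_length_iff (hlen : σ.length < h) :
    IsBranching S n (h - σ.length) σ ↔
      σ ∈ S ∧ n ≤ {i | IsBranching S n (h - (σ ++ [i]).length) (σ ++ [i])}.ncard := by
  obtain ⟨k, hk⟩ : ∃ k, h - σ.length = k + 1 := ⟨h - σ.length - 1, by omega⟩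
  simp only [List.length_append, List.length_singleton, ← Nat.sub_sub, hk, Nat.add_sub_cancel]
  rfl

theorem exists_regularSubtree_subset_of_isBranching (hroot : IsBranching S n h []) :
    ∃ F ⊆ S, IsRegularSubtreeOfHeight n h F := by
  obtain ⟨F, hF, hFP⟩ := exists_regularSubtree_forall_of_le_ncard
    (P := fun σ => IsBranching S n (h - σ.length) σ) hroot
    fun σ hσ hlen => ((isBranching_sub_length_iff hlen).1 hσ).2
  exact ⟨F, fun σ hσ => (hFP σ hσ).mem, hF⟩

lemma le_ncard_children_not_isBranching (hS : IsSubtree S) (hn : 0 < n) (hmn : m + n ≤ N + 1)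
    (hlen : σ.length < h) (hσ : ¬ IsBranching S n (h - σ.length) σ) :
    m ≤ {i | ¬ IsBranching S n (h - (σ ++ [i]).length) (σ ++ [i])}.ncard := by
  set B := {i | IsBranching S n (h - (σ ++ [i]).length) (σ ++ [i])}
  have hB : B.ncard < n := by
    by_cases hσS : σ ∈ S
    · rw [isBranching_sub_length_iff hlen, not_and, not_le] at hσ
      exact hσ hσS
    · have hBempty : B = ∅ := eq_empty_of_forall_notMem fun i hi =>
        hσS (hS.2 _ hi.mem σ (List.prefix_append σ [i]))
      rwa [hBempty, ncard_empty]
  have hsum := ncard_add_ncard_compl B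
  rw [Nat.card_eq_fintype_card, Fintype.card_fin] at hsum
  change m ≤ Bᶜ.ncard
  omega

theorem exists_regularSubtree_avoiding_of_not_isBranching (hS : IsSubtree S) (hn : 0 < n)
    (hmn : m + n ≤ N + 1) (hroot : ¬ IsBranching S n h []) :
    ∃ R, IsRegularSubtreeOfHeight m h R ∧ ∀ σ ∈ R, σ.length = h → σ ∉ S := by
  obtain ⟨R, hR, hRP⟩ := exists_regularSubtree_forall_of_le_ncard
    (P := fun σ => ¬ IsBranching S n (h - σ.length) σ) hroot
    fun σ hσ hlen => le_ncard_children_not_isBranching hS hn hmn hlen hσ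
  refine ⟨R, hR, fun σ hσ hlen hσS => hRP σ hσ ?_⟩
  rwa [hlen, Nat.sub_self]

end Branching

theorem finite_subtree_regular_general (N h : ℕ)
    (S : Set (List (Fin N))) (hS : IsSubtree S)
    (m : ℕ) (hmN : m ≤ N)
    (hyp : ∀ R : Set (List (Fin N)), IsRegularSubtreeOfHeight m h R →
      ∃ σ : List (Fin N), σ.length = h ∧ σ ∈ S ∧ σ ∈ R) :
    ∃ F : Set (List (Fin N)), F ⊆ S ∧ IsRegularSubtreeOfHeight (N - m + 1) h F := by
  by_cases hroot : IsBranching S (N - m + 1) h []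
  · exact exists_regularSubtree_subset_of_isBranching hroot
  · have hmn : m + (N - m + 1) ≤ N + 1 := by omega
    obtain ⟨R, hR, hRS⟩ :=
      exists_regularSubtree_avoiding_of_not_isBranching hS (Nat.succ_pos _) hmn hroot
    obtain ⟨σ, hlen, hσS, hσR⟩ := hyp R hR
    exact absurd hσS (hRS σ hσR hlen)

/-- Lemma 1 (finite version): let `S` be a subtree of the full `N`-ary tree of
height `h`.  If every `(m,h)`-regular subtree meets the `h`-th level of `S`,
then `S` contains an `(N - m + 1, h)`-regular subtree. -/
theorem finite_subtree_regular (N h : ℕ) (hN : 1 ≤ N) (hh : 1 ≤ h)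
    (S : Set (List (Fin N))) (hS : IsSubtree S) (hSh : ∀ σ ∈ S, σ.length ≤ h)
    (m : ℕ) (hm : 1 ≤ m) (hmN : m ≤ N)
    (hyp : ∀ R : Set (List (Fin N)), IsRegularSubtreeOfHeight m h R →
      ∃ σ : List (Fin N), σ.length = h ∧ σ ∈ S ∧ σ ∈ R) :
    ∃ F : Set (List (Fin N)), F ⊆ S ∧ IsRegularSubtreeOfHeight (N - m + 1) h F :=
  finite_subtree_regular_general N h S hS m hmN hyp
end

section
/- Let s, t > 0 with s + t = 1, let θ ∈ ℝ, let c > 0 with c ≤ inf_{q ∈ ℕ, q ≥ 1} q^(1/s) ‖qθ‖, and let p, q, r be integers with q > 0 and |θ − p/q| < c / q^{1+s}. Then there exist integers A, B, C with |A| ≤ q^s, 0 < B ≤ q^t, and A·p − B·r + C·q = 0; equivalently, there exists a non-vertical rational line y = (Ax + C)/B with |A| ≤ q^s and 0 < B ≤ q^t passing through the point (p/q, r/q). -/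
/-- Distance from a real number to the nearest integer. -/
noncomputable def dInt (x : ℝ) : ℝ := ⨅ n : ℤ, |x - n|

/-!
Among the more than `q` pairs `(a, b) ∈ [0, ⌊q^s⌋] × [0, ⌊q^t⌋]`, two have `a p - b r` in the same
class mod `q`; their difference `(A, B)`, oriented so that `B ≥ 0`, satisfies `q ∣ A p - B r`, and
`C` is the quotient. `B = 0` is impossible: then `q ∣ A p` with `A ≠ 0`, so
`‖Aθ‖ ≤ |A| |θ - p/q|`, and `c ≤ |A|^(1/s) ‖Aθ‖` with `|A|^(1/s) ≤ q` gives
`c < q · q^s · c / q^(1+s) = c`.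
-/

open Finset

lemma dInt_nonneg (x : ℝ) : 0 ≤ dInt x :=
  le_ciInf fun _ => abs_nonneg _

lemma dInt_le (x : ℝ) (n : ℤ) : dInt x ≤ |x - n| :=
  ciInf_le ⟨0, by rintro _ ⟨m, rfl⟩; exact abs_nonneg _⟩ n

lemma dInt_neg (x : ℝ) : dInt (-x) = dInt x := by
  unfold dInt
  rw [← (Equiv.neg ℤ).iInf_comp]
  congr 1 with n
  rw [← abs_neg]
  push_cast [Equiv.neg_apply]
  ring_nf

lemma dInt_abs_mul (A : ℤ) (x : ℝ) : dInt (|(A : ℝ)| * x) = dInt (A * x) := by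
  rcases abs_choice (A : ℝ) with h | h <;> rw [h]
  rw [neg_mul, dInt_neg]

lemma exists_dvd_mul_sub_mul {q : ℤ} (hq : 0 < q) {m n : ℕ} (h : q < (m + 1) * (n + 1))
    (p r : ℤ) :
    ∃ A B : ℤ, (A ≠ 0 ∨ B ≠ 0) ∧ A.natAbs ≤ m ∧ 0 ≤ B ∧ B ≤ n ∧ q ∣ A * p - B * r := by
  have hcard : #(Ico 0 q) < #(range (m + 1) ×ˢ range (n + 1)) := by
    simp only [Int.card_Ico, card_product, card_range]
    rw [sub_zero]
    zify
    rwa [Int.toNat_of_nonneg hq.le]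
  obtain ⟨x, hx, y, hy, hne, hxy⟩ := exists_ne_map_eq_of_card_lt_of_maps_to hcard
    (f := fun x : ℕ × ℕ => ((x.1 : ℤ) * p - x.2 * r) % q)
    fun _ _ => by simp [Int.emod_nonneg, Int.emod_lt_of_pos, hq.ne', hq]
  wlog hle : y.2 ≤ x.2 generalizing x y
  · exact this y hy x hx hne.symm hxy.symm (by omega)
  simp only [mem_product, mem_range] at hx hy
  refine ⟨x.1 - y.1, x.2 - y.2, ?_, by omega, by omega, by omega, ?_⟩
  · by_contra! h0
    exact hne (Prod.ext (by omega) (by omega))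
  · exact (Int.ModEq.dvd hxy.symm).trans (dvd_of_eq (by ring))

section BadlyApproximable

variable {s θ c : ℝ}

lemma le_rpow_mul_dInt (hcθ : c ≤ ⨅ q : {q : ℕ // 0 < q}, (q : ℝ) ^ (1 / s) * dInt ((q : ℝ) * θ))
    {A : ℤ} (hA : A ≠ 0) : c ≤ |(A : ℝ)| ^ (1 / s) * dInt (A * θ) := by
  have hbdd : BddBelow (Set.range fun q : {q : ℕ // 0 < q} => (q : ℝ) ^ (1 / s) * dInt (q * θ)) :=
    ⟨0, by rintro _ ⟨q, rfl⟩; exact mul_nonneg (by positivity) (dInt_nonneg _)⟩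
  have := hcθ.trans (ciInf_le hbdd ⟨A.natAbs, Int.natAbs_pos.2 hA⟩)
  rwa [Nat.cast_natAbs, Int.cast_abs, dInt_abs_mul] at this

lemma not_dvd_mul_of_abs_sub_lt (hs : 0 < s)
    (hcθ : c ≤ ⨅ q : {q : ℕ // 0 < q}, (q : ℝ) ^ (1 / s) * dInt ((q : ℝ) * θ))
    {p q : ℤ} (hq : 0 < q) (hpq : |θ - p / q| < c / (q : ℝ) ^ (1 + s))
    {A : ℤ} (hA : A ≠ 0) (hAq : |(A : ℝ)| ≤ (q : ℝ) ^ s) :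
    ¬ q ∣ A * p := by
  rintro ⟨k, hk⟩
  refine lt_irrefl c ?_
  have hq' : (0 : ℝ) < q := by exact_mod_cast hq
  have hA' : (0 : ℝ) < |(A : ℝ)| := by positivity
  have hdist : dInt (A * θ) ≤ |(A : ℝ)| * |θ - p / q| := by
    have hk' : (k : ℝ) = A * p / q := by
      rw [eq_div_iff hq'.ne']
      exact_mod_cast (hk.trans (mul_comm q k)).symm
    calc dInt (A * θ) ≤ |A * θ - k| := dInt_le _ _
      _ = |(A : ℝ)| * |θ - p / q| := by rw [hk', ← abs_mul, mul_sub, mul_div_assoc]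
  have hroot : |(A : ℝ)| ^ (1 / s) ≤ q := by
    calc |(A : ℝ)| ^ (1 / s) ≤ ((q : ℝ) ^ s) ^ (1 / s) := by gcongr
      _ = q := by rw [← Real.rpow_mul hq'.le, mul_one_div_cancel hs.ne', Real.rpow_one]
  calc c ≤ |(A : ℝ)| ^ (1 / s) * dInt (A * θ) := le_rpow_mul_dInt hcθ hA
    _ ≤ q * (|(A : ℝ)| * |θ - p / q|) := mul_le_mul hroot hdist (dInt_nonneg _) hq'.le
    _ < q * ((q : ℝ) ^ s * (c / (q : ℝ) ^ (1 + s))) :=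
      mul_lt_mul_of_pos_left (mul_lt_mul' hAq hpq (abs_nonneg _) (hA'.trans_le hAq)) hq'
    _ = c := by rw [Real.rpow_add hq', Real.rpow_one]; field_simp

end BadlyApproximable

theorem exists_line_through_good_point_general (s t θ c : ℝ)
    (hs : 0 < s) (hst : s + t = 1)
    (hcθ : c ≤ ⨅ q : {q : ℕ // 0 < q}, (q : ℝ) ^ (1 / s) * dInt ((q : ℝ) * θ))
    (p q r : ℤ) (hq : 0 < q)
    (hpq : |θ - (p : ℝ) / (q : ℝ)| < c / (q : ℝ) ^ (1 + s)) :
    ∃ A B C : ℤ, |(A : ℝ)| ≤ (q : ℝ) ^ s ∧ 0 < B ∧ (B : ℝ) ≤ (q : ℝ) ^ t ∧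
      A * p - B * r + C * q = 0 := by
  have hq' : (0 : ℝ) < q := by exact_mod_cast hq
  have hlt : q < ((⌊(q : ℝ) ^ s⌋₊ : ℤ) + 1) * ((⌊(q : ℝ) ^ t⌋₊ : ℤ) + 1) := by
    have : (q : ℝ) < ((⌊(q : ℝ) ^ s⌋₊ : ℝ) + 1) * ((⌊(q : ℝ) ^ t⌋₊ : ℝ) + 1) :=
      calc (q : ℝ) = q ^ s * q ^ t := by rw [← Real.rpow_add hq', hst, Real.rpow_one]
        _ < _ := mul_lt_mul'' (Nat.lt_floor_add_one _) (Nat.lt_floor_add_one _)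
          (by positivity) (by positivity)
    exact_mod_cast this
  obtain ⟨A, B, hAB, hA, hB₀, hB, hdvd⟩ := exists_dvd_mul_sub_mul hq hlt p r
  have hAs : |(A : ℝ)| ≤ (q : ℝ) ^ s :=
    calc |(A : ℝ)| = A.natAbs := by rw [Nat.cast_natAbs, Int.cast_abs]
      _ ≤ ⌊(q : ℝ) ^ s⌋₊ := by exact_mod_cast hA
      _ ≤ _ := Nat.floor_le (by positivity)
  have hBpos : 0 < B := by
    refine hB₀.lt_of_ne' fun hB0 => ?_
    subst hB0
    exact not_dvd_mul_of_abs_sub_lt hs hcθ hq hpq (hAB.resolve_right (not_not.2 rfl)) hAs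
      (by simpa using hdvd)
  obtain ⟨C, hC⟩ := hdvd
  refine ⟨A, B, -C, hAs, hBpos, ?_, by rw [hC]; ring⟩
  calc (B : ℝ) ≤ ⌊(q : ℝ) ^ t⌋₊ := by exact_mod_cast hB
    _ ≤ _ := Nat.floor_le (by positivity)

/-- Lemma (BPV, Lemma 1): if `s,t > 0`, `s + t = 1`,
`0 < c ≤ inf_{q ≥ 1} q^(1/s) ‖qθ‖` and `|θ - p/q| < c/q^(1+s)` with `q > 0`,
then there is a non-vertical rational line `y = (Ax + C)/B` through `(p/q, r/q)`
with `|A| ≤ q^s` and `0 < B ≤ q^t`. -/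
theorem exists_line_through_good_point (s t θ c : ℝ)
    (hs : 0 < s) (ht : 0 < t) (hst : s + t = 1) (hc : 0 < c)
    (hcθ : c ≤ ⨅ q : {q : ℕ // 0 < q}, (q : ℝ) ^ (1 / s) * dInt ((q : ℝ) * θ))
    (p q r : ℤ) (hq : 0 < q)
    (hpq : |θ - (p : ℝ) / (q : ℝ)| < c / (q : ℝ) ^ (1 + s)) :
    ∃ A B C : ℤ, |(A : ℝ)| ≤ (q : ℝ) ^ s ∧ 0 < B ∧ (B : ℝ) ≤ (q : ℝ) ^ t ∧
      A * p - B * r + C * q = 0 :=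
  exists_line_through_good_point_general s t θ c hs hst hcθ p q r hq hpq
end

section
/- Let s, t ≥ 0 with s + t = 1 and let p, q, r be integers with q > 0. Then there exist integers A, B, C with |A| ≤ q^s, 0 ≤ B ≤ q^t, (A, B) ≠ (0, 0), and A·p − B·r + C·q = 0. -/
/-!
Put `a = ⌊q^s⌋` and `b = ⌊q^t⌋`. Since `q = q^s q^t < (a + 1)(b + 1)`, two of the pairs
`(x, y) ∈ [0, a] × [0, b]` give the same residue of `x p - y r` modulo `q`; their difference,
negated if necessary so that its second coordinate is nonnegative, is the required `(A, B)`.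
-/

lemma mul_lt_floor_add_one_mul_floor_add_one {x y : ℝ} (hx : 0 ≤ x) (hy : 0 ≤ y) :
    x * y < (⌊x⌋₊ + 1) * (⌊y⌋₊ + 1) :=
  mul_lt_mul'' (Nat.lt_floor_add_one x) (Nat.lt_floor_add_one y) hx hy

lemma exists_abs_le_dvd_sub_mul_of_lt_mul (n a b : ℕ) [NeZero n] (h : n < (a + 1) * (b + 1))
    (p r : ℤ) :
    ∃ A B : ℤ, |A| ≤ a ∧ |B| ≤ b ∧ ¬(A = 0 ∧ B = 0) ∧ (n : ℤ) ∣ A * p - B * r := by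
  obtain ⟨x, y, hne, hxy⟩ := Fintype.exists_ne_map_eq_of_card_lt
    (fun ab : Fin (a + 1) × Fin (b + 1) => (((ab.1 : ℤ) * p - (ab.2 : ℤ) * r : ℤ) : ZMod n))
    (by simpa using h)
  have hx₁ := x.1.isLt; have hx₂ := x.2.isLt; have hy₁ := y.1.isLt; have hy₂ := y.2.isLt
  refine ⟨(x.1 : ℤ) - y.1, (x.2 : ℤ) - y.2, abs_sub_le_iff.2 ⟨by omega, by omega⟩,
    abs_sub_le_iff.2 ⟨by omega, by omega⟩, fun ⟨h₁, h₂⟩ => hne (Prod.ext ?_ ?_),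
    (ZMod.intCast_zmod_eq_zero_iff_dvd _ n).1 ?_⟩
  · exact Fin.ext (by omega)
  · exact Fin.ext (by omega)
  · push_cast at hxy ⊢
    linear_combination hxy

lemma exists_abs_le_nonneg_le_dvd_sub_mul_of_lt_mul (n a b : ℕ) [NeZero n]
    (h : n < (a + 1) * (b + 1)) (p r : ℤ) :
    ∃ A B : ℤ, |A| ≤ a ∧ 0 ≤ B ∧ B ≤ b ∧ ¬(A = 0 ∧ B = 0) ∧ (n : ℤ) ∣ A * p - B * r := by
  obtain ⟨A, B, hA, hB, hAB, hdvd⟩ := exists_abs_le_dvd_sub_mul_of_lt_mul n a b h p r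
  rcases le_total 0 B with hB₀ | hB₀
  · exact ⟨A, B, hA, hB₀, (le_abs_self B).trans hB, hAB, hdvd⟩
  · refine ⟨-A, -B, by rwa [abs_neg], by omega, (neg_le_abs B).trans hB, by omega, ?_⟩
    rw [show -A * p - -B * r = -(A * p - B * r) by ring, dvd_neg]
    exact hdvd

theorem exists_integer_relation_general (s t : ℝ) (hst : s + t = 1)
    (p q r : ℤ) (hq : 0 < q) :
    ∃ A B C : ℤ, |(A : ℝ)| ≤ (q : ℝ) ^ s ∧ 0 ≤ B ∧ (B : ℝ) ≤ (q : ℝ) ^ t ∧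
      ¬(A = 0 ∧ B = 0) ∧ A * p - B * r + C * q = 0 := by
  lift q to ℕ using hq.le
  have hq₀ : (0 : ℝ) < q := by exact_mod_cast hq
  have : NeZero q := ⟨by omega⟩
  have hbox : q < (⌊(q : ℝ) ^ s⌋₊ + 1) * (⌊(q : ℝ) ^ t⌋₊ + 1) := by
    have := mul_lt_floor_add_one_mul_floor_add_one
      (Real.rpow_nonneg hq₀.le s) (Real.rpow_nonneg hq₀.le t)
    rw [← Real.rpow_add hq₀, hst, Real.rpow_one] at this
    exact_mod_cast this
  obtain ⟨A, B, hA, hB₀, hB, hAB, k, hk⟩ :=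
    exists_abs_le_nonneg_le_dvd_sub_mul_of_lt_mul q _ _ hbox p r
  refine ⟨A, B, -k, ?_, hB₀, ?_, hAB, by rw [hk]; ring⟩
  · calc |(A : ℝ)| ≤ ⌊(q : ℝ) ^ s⌋₊ := by exact_mod_cast hA
      _ ≤ (q : ℝ) ^ s := Nat.floor_le (Real.rpow_nonneg hq₀.le s)
  · calc (B : ℝ) ≤ ⌊(q : ℝ) ^ t⌋₊ := by exact_mod_cast hB
      _ ≤ (q : ℝ) ^ t := Nat.floor_le (Real.rpow_nonneg hq₀.le t)

/-- Pigeonhole step of BPV, Lemma 1: for `s,t ≥ 0` with `s + t = 1` and integers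
`p, q, r` with `q > 0`, there exist integers `A, B, C` with `|A| ≤ q^s`,
`0 ≤ B ≤ q^t`, `(A,B) ≠ (0,0)` and `Ap - Br + Cq = 0`. -/
theorem exists_integer_relation (s t : ℝ) (hs : 0 ≤ s) (ht : 0 ≤ t) (hst : s + t = 1)
    (p q r : ℤ) (hq : 0 < q) :
    ∃ A B C : ℤ, |(A : ℝ)| ≤ (q : ℝ) ^ s ∧ 0 ≤ B ∧ (B : ℝ) ≤ (q : ℝ) ^ t ∧
      ¬(A = 0 ∧ B = 0) ∧ A * p - B * r + C * q = 0 :=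
  exists_integer_relation_general s t hst p q r hq
end

section
/- Let s, t > 0 with s + t = 1, let θ ∈ ℝ and c > 0. Let p, q, r, A, B, C be integers with q > 0, B > 0, |θ − p/q| < c / q^{1+s}, |A| ≤ q^s, B ≤ q^t, and A·p − B·r + C·q = 0. Then every y ∈ ℝ with |y − r/q| < c / q^{1+t} satisfies |y − (Aθ + C)/B| < 2c / (qB). -/
namespace NearLine

open Real

theorem sub_line_eq_of_mem_line {A B C p q r θ y : ℝ} (hq : q ≠ 0) (hB : B ≠ 0)
    (hline : A * p - B * r + C * q = 0) :
    y - (A * θ + C) / B = (y - r / q) - A / B * (θ - p / q) := by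
  field_simp
  linear_combination (-1 : ℝ) * hline

theorem div_rpow_one_add_le {q B c t : ℝ} (hq : 0 < q) (hB : 0 < B) (hc : 0 ≤ c)
    (hBq : B ≤ q ^ t) : c / q ^ (1 + t) ≤ c / (q * B) := by
  rw [add_comm, rpow_add_one hq.ne', mul_comm]
  gcongr

theorem abs_div_mul_le {A B q c s x : ℝ} (hq : 0 < q) (hB : 0 < B)
    (hA : |A| ≤ q ^ s) (hx : |x| ≤ c / q ^ (1 + s)) : |A / B * x| ≤ c / (q * B) :=
  calc |A / B * x| = |A| / B * |x| := by rw [abs_mul, abs_div, abs_of_pos hB]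
    _ ≤ q ^ s / B * (c / q ^ (1 + s)) := by gcongr
    _ = c / (q * B) := by
      rw [add_comm, rpow_add_one hq.ne']
      field_simp

end NearLine

open NearLine in
theorem near_line_estimate_general (s t θ c : ℝ)
    (hc : 0 < c) (p q r A B C : ℤ) (hq : 0 < q) (hB : 0 < B)
    (hpq : |θ - (p : ℝ) / (q : ℝ)| < c / (q : ℝ) ^ (1 + s))
    (hA : |(A : ℝ)| ≤ (q : ℝ) ^ s) (hBq : (B : ℝ) ≤ (q : ℝ) ^ t)
    (hline : A * p - B * r + C * q = 0) :
    ∀ y : ℝ, |y - (r : ℝ) / (q : ℝ)| < c / (q : ℝ) ^ (1 + t) →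
      |y - ((A : ℝ) * θ + (C : ℝ)) / (B : ℝ)| < 2 * c / ((q : ℝ) * (B : ℝ)) := by
  intro y hy
  have hq' : (0 : ℝ) < q := by exact_mod_cast hq
  have hB' : (0 : ℝ) < B := by exact_mod_cast hB
  have hline' : (A : ℝ) * p - B * r + C * q = 0 := by exact_mod_cast hline
  calc |y - ((A : ℝ) * θ + C) / B|
      = |(y - r / q) - A / B * (θ - p / q)| := by
        rw [sub_line_eq_of_mem_line hq'.ne' hB'.ne' hline']
    _ ≤ |y - r / q| + |(A : ℝ) / B * (θ - p / q)| := abs_sub _ _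
    _ < c / (q * B) + c / (q * B) :=
        add_lt_add_of_lt_of_le (hy.trans_le (div_rpow_one_add_le hq' hB' hc.le hBq))
          (abs_div_mul_le hq' hB' hA hpq.le)
    _ = 2 * c / (q * B) := by ring

/-- If the rational point `(p/q, r/q)` is close to the vertical line through `θ`
and lies on the rational line `y = (Ax + C)/B` with `|A| ≤ q^s`, `0 < B ≤ q^t`,
then every `y` with `|y - r/q| < c/q^(1+t)` satisfies
`|y - (Aθ + C)/B| < 2c/(qB)`. -/
theorem near_line_estimate (s t θ c : ℝ) (hs : 0 < s) (ht : 0 < t) (hst : s + t = 1)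
    (hc : 0 < c) (p q r A B C : ℤ) (hq : 0 < q) (hB : 0 < B)
    (hpq : |θ - (p : ℝ) / (q : ℝ)| < c / (q : ℝ) ^ (1 + s))
    (hA : |(A : ℝ)| ≤ (q : ℝ) ^ s) (hBq : (B : ℝ) ≤ (q : ℝ) ^ t)
    (hline : A * p - B * r + C * q = 0) :
    ∀ y : ℝ, |y - (r : ℝ) / (q : ℝ)| < c / (q : ℝ) ^ (1 + t) →
      |y - ((A : ℝ) * θ + (C : ℝ)) / (B : ℝ)| < 2 * c / ((q : ℝ) * (B : ℝ)) :=
  near_line_estimate_general s t θ c hc p q r A B C hq hB hpq hA hBq hline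
end

section
/- Let (a_n)_{n≥0} be a sequence of real numbers with a₀ = 1 such that for every n ≥ 1, a_n ≥ 6·a_{n−1} − Σ_{k=1}^{n} 2·a_{n−k}. Then for every n ≥ 1, a_n > 2·a_{n−1}; in particular a_n > 0 for all n and the sequence is strictly increasing and unbounded. -/
open Finset Filter

theorem Finset.sum_Icc_one_sub_eq_sum_range {M : Type*} [AddCommMonoid M] (f : ℕ → M) (n : ℕ) :
    ∑ k ∈ Icc 1 n, f (n - k) = ∑ j ∈ range n, f j := by
  refine sum_nbij' (fun k ↦ n - k) (fun j ↦ n - j) ?_ ?_ ?_ ?_ (fun _ _ ↦ rfl) <;>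
    intro x hx <;> simp at hx ⊢ <;> omega

/-- The invariant is `∑_{j ≤ n} aⱼ < 2aₙ`: with the recurrence it forces `aₙ₊₁ > 2aₙ`, and then
`∑_{j ≤ n+1} aⱼ < 2aₙ + aₙ₊₁ < 2aₙ₊₁`. -/
theorem two_mul_lt_succ_of_recurrence {a : ℕ → ℝ} (h0 : 0 < a 0)
    (hrec : ∀ n, 6 * a n - 2 * ∑ j ∈ range (n + 1), a j ≤ a (n + 1)) (n : ℕ) :
    2 * a n < a (n + 1) := by
  have step : ∀ n, ∑ j ∈ range (n + 1), a j < 2 * a n → 2 * a n < a (n + 1) :=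
    fun n h ↦ by linarith [hrec n]
  suffices partial_sum : ∑ j ∈ range (n + 1), a j < 2 * a n from step n partial_sum
  induction n with
  | zero => simpa using lt_two_mul_self h0
  | succ n ih => rw [sum_range_succ]; linarith [step n ih]

/-- The counting recurrence: if `a₀ = 1` and
`aₙ ≥ 6·aₙ₋₁ - Σ_{k=1}^{n} 2·aₙ₋ₖ` for all `n ≥ 1`, then `aₙ > 2·aₙ₋₁`
for all `n ≥ 1`; in particular all `aₙ > 0`, the sequence is strictly
increasing, and it is unbounded. -/
theorem counting_recurrence (a : ℕ → ℝ) (h0 : a 0 = 1)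
    (hrec : ∀ n : ℕ, 1 ≤ n →
      6 * a (n - 1) - ∑ k ∈ Finset.Icc 1 n, 2 * a (n - k) ≤ a n) :
    (∀ n : ℕ, 1 ≤ n → 2 * a (n - 1) < a n) ∧ (∀ n : ℕ, 0 < a n) ∧
      StrictMono a ∧ ¬ BddAbove (Set.range a) := by
  have h0_pos : 0 < a 0 := h0 ▸ one_pos
  have hdouble : ∀ n, 2 * a n < a (n + 1) := by
    refine two_mul_lt_succ_of_recurrence h0_pos fun n ↦ ?_
    simpa [← mul_sum, sum_Icc_one_sub_eq_sum_range] using hrec (n + 1) n.succ_pos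
  have hpos : ∀ n, 0 < a n := fun n ↦ (mul_pos (pow_pos two_pos n) h0_pos).trans_le
    (geom_le zero_le_two n fun k _ ↦ (hdouble k).le)
  have htendsto : Tendsto a atTop atTop :=
    tendsto_atTop_of_geom_le h0_pos one_lt_two fun n ↦ (hdouble n).le
  refine ⟨fun n hn ↦ ?_, hpos, strictMono_nat_of_lt_succ fun n ↦ by linarith [hdouble n, hpos n],
    not_bddAbove_of_tendsto_atTop htendsto⟩
  obtain ⟨m, rfl⟩ := Nat.exists_eq_add_of_le' hn
  exact hdouble m
end
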